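/- arXiv:2102.09901 — 3 statements merged into one kernel-verified Lean document; each statement's English description precedes it below -/
import Mathlib

section
/- Let X be a family of subsets of E such that val_X is submodular, so that val_X is the rank function of a matroid M_X. If there exists at least one X-matroid on E, then M_X is itself an X-matroid and every X-matroid M on E satisfies M ⪯ M_X in the weak order (every independent set of M is independent in M_X); i.e., M_X is the unique maximal X-matroid. -/
open Set

variable {α : Type*}

/-- `C` is a circuit of `M`: a minimal dependent subset of the ground set. -/
def Matroid.IsCircuit' (M : Matroid α) (C : Set α) : Prop :=
  C ⊆ M.E ∧ ¬ M.Indep C ∧ ∀ e ∈ C, M.Indep (C \ {e})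

/-- `M` is an `X`-matroid on `E`: a matroid with ground set `E` in which every member of the
family `X` is a circuit. -/
def IsXMatroid (E : Set α) (X : Set (Set α)) (M : Matroid α) : Prop :=
  M.E = E ∧ ∀ C ∈ X, M.IsCircuit' C

/-- The union of a list of sets. -/
def unionList (S : List (Set α)) : Set α := ⋃ Y ∈ S, Y

/-- A proper `X`-sequence: a list of members of `X` such that no term is contained in the
union of the preceding terms. -/
def ProperSeq (X : Set (Set α)) (S : List (Set α)) : Prop :=
  (∀ Y ∈ S, Y ∈ X) ∧
  ∀ i : Fin S.length, 0 < i.1 → ¬ (S.get i ⊆ unionList (S.take i.1))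

/-- `val(F, S) = |F ∪ ⋃ S| - |S|`. -/
noncomputable def valSeq (F : Set α) (S : List (Set α)) : ℤ :=
  ((F ∪ unionList S).ncard : ℤ) - S.length

/-- `val_X(F)`: the minimum of `val(F, S)` over all proper `X`-sequences `S`. -/
noncomputable def valX (X : Set (Set α)) (F : Set α) : ℤ :=
  sInf {v : ℤ | ∃ S : List (Set α), ProperSeq X S ∧ v = valSeq F S}

/-- The rank of a set `F` in a matroid `M`: the largest size of an independent subset of `F`. -/
noncomputable def mrk (M : Matroid α) (F : Set α) : ℕ :=
  sSup {n : ℕ | ∃ I ⊆ F, M.Indep I ∧ I.ncard = n}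

/-- The weak order on matroids: `M ⪯ N` iff every independent set of `M` is independent in `N`. -/
def WeakLE (M N : Matroid α) : Prop := ∀ I : Set α, M.Indep I → N.Indep I

/-!
For an `X`-matroid `N`, each term of a proper `X`-sequence `S` is a circuit not contained in the
union `U` of the earlier terms, so it raises the nullity `|U| - r_N(U)` by at least one. Hence
`r_N(F) ≤ r_N(F ∪ U) ≤ |F ∪ U| - |S| = val(F, S)`, i.e. `r_N ≤ val_X = r_{M_X}`. An independent set
`I` of `N` then has `|I| = r_N(I) ≤ r_{M_X}(I) ≤ |I|`, so it is independent in `M_X`. For `C ∈ X`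
this makes every `C \ {e}` independent in `M_X`, while `val_X(C) ≤ val(C, [C]) = |C| - 1` makes `C`
dependent.
-/

namespace Matroid

variable {M : Matroid α}

lemma isCircuit'_iff {C : Set α} : M.IsCircuit' C ↔ M.IsCircuit C := by
  rw [isCircuit_iff_dep_forall_sdiff_singleton_indep, IsCircuit', Dep]
  tauto

lemma cast_mrk_eq_eRk (M : Matroid α) {F : Set α} (hF : F.Finite) :
    (mrk M F : ℕ∞) = M.eRk F := by
  obtain ⟨I, hI⟩ := M.exists_isBasis' F
  have hIfin : I.Finite := hF.subset hI.subset
  have hmax : IsGreatest {n : ℕ | ∃ J ⊆ F, M.Indep J ∧ J.ncard = n} I.ncard := by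
    refine ⟨⟨I, hI.subset, hI.indep, rfl⟩, ?_⟩
    rintro _ ⟨J, hJF, hJ, rfl⟩
    have hJI : J.encard ≤ I.encard := hI.encard_eq_eRk ▸ hJ.encard_le_eRk_of_subset hJF
    rwa [← (hF.subset hJF).cast_ncard_eq, ← hIfin.cast_ncard_eq, Nat.cast_le] at hJI
  rw [mrk, hmax.csSup_eq, hIfin.cast_ncard_eq, hI.encard_eq_eRk]

lemma Indep.mrk_eq_ncard {I : Set α} (hI : M.Indep I) (hIfin : I.Finite) :
    mrk M I = I.ncard := by
  have h := M.cast_mrk_eq_eRk hIfin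
  rw [hI.eRk_eq_encard, ← hIfin.cast_ncard_eq] at h
  exact_mod_cast h

lemma indep_of_ncard_le_mrk {F : Set α} (hF : F.Finite)
    (h : F.ncard ≤ mrk M F) : M.Indep F := by
  rw [indep_iff_eRk_eq_encard_of_finite hF]
  refine le_antisymm (M.eRk_le_encard F) ?_
  rw [← M.cast_mrk_eq_eRk hF, ← hF.cast_ncard_eq]
  exact_mod_cast h

lemma IsCircuit.eRk_union_add_one_le {A C : Set α} (hC : M.IsCircuit C)
    (hCA : ¬ C ⊆ A) : M.eRk (A ∪ C) + 1 ≤ M.eRk A + (C \ A).encard := by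
  obtain ⟨e, heC, heA⟩ := not_subset.1 hCA
  set D := (C \ A) \ {e}
  have hsplit : A ∪ C = insert e (A ∪ D) := by
    ext x
    simp only [D, mem_union, mem_insert_iff, mem_sdiff, mem_singleton_iff]
    by_cases hx : x = e <;> by_cases hxA : x ∈ A <;> simp_all
  -- `e` lies in the closure of `C \ {e} ⊆ A ∪ D`, so it does not raise the rank
  have hcl : e ∈ M.closure (A ∪ D) :=
    M.closure_subset_closure (fun x hx => by by_cases hxA : x ∈ A <;> simp_all [D])
      (hC.mem_closure_sdiff_singleton_of_mem heC)
  rw [hsplit, ← M.eRk_closure_eq, M.closure_insert_eq_of_mem_closure hcl, M.eRk_closure_eq,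
    ← encard_sdiff_singleton_add_one (show e ∈ C \ A from ⟨heC, heA⟩), ← add_assoc]
  exact add_le_add_left (M.eRk_union_le_eRk_add_encard A D) 1

end Matroid

@[simp] lemma unionList_nil : unionList ([] : List (Set α)) = ∅ := by simp [unionList]

lemma unionList_append (S T : List (Set α)) :
    unionList (S ++ T) = unionList S ∪ unionList T := by
  simp only [unionList, List.mem_append, iUnion_or, iUnion_union_distrib]

@[simp] lemma unionList_singleton (C : Set α) : unionList [C] = C := by simp [unionList]

lemma unionList_subset {S : List (Set α)} {E : Set α} (h : ∀ Y ∈ S, Y ⊆ E) :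
    unionList S ⊆ E :=
  iUnion₂_subset h

lemma properSeq_nil (X : Set (Set α)) : ProperSeq X [] :=
  ⟨by simp, fun i => i.elim0⟩

lemma properSeq_singleton {X : Set (Set α)} {C : Set α} (hC : C ∈ X) : ProperSeq X [C] :=
  ⟨by simpa using hC, fun i hpos => by
    have hi : (i : ℕ) < 1 := i.isLt
    omega⟩

lemma ProperSeq.of_append_singleton {X : Set (Set α)} {S : List (Set α)} {C : Set α}
    (h : ProperSeq X (S ++ [C])) :
    ProperSeq X S ∧ C ∈ X ∧ (S ≠ [] → ¬ C ⊆ unionList S) := by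
  refine ⟨⟨fun Y hY => h.1 Y (by simp [hY]), fun i hi hsub => ?_⟩, h.1 C (by simp),
    fun hS hsub => ?_⟩
  · refine h.2 ⟨i, by simp⟩ hi ?_
    simpa [List.getElem_append_left i.isLt, List.take_append_of_le_length i.isLt.le] using hsub
  · refine h.2 ⟨S.length, by simp⟩ (List.length_pos_iff.2 hS) ?_
    simpa using hsub

namespace ProperSeq

variable {M : Matroid α} {X : Set (Set α)} {S : List (Set α)}

lemma eRk_unionList_add_length_le (hX : ∀ C ∈ X, M.IsCircuit C) (hS : ProperSeq X S) :
    M.eRk (unionList S) + S.length ≤ (unionList S).encard := by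
  induction S using List.reverseRecOn with
  | nil => simp
  | append_singleton S C ih =>
    obtain ⟨hS, hCX, hCS⟩ := hS.of_append_singleton
    have hCU : ¬ C ⊆ unionList S := by
      rcases eq_or_ne S [] with rfl | hne
      · simpa [subset_empty_iff] using (hX C hCX).nonempty.ne_empty
      · exact hCS hne
    rw [unionList_append, unionList_singleton, List.length_append, List.length_singleton,
      Nat.cast_add, Nat.cast_one]
    set U := unionList S
    calc M.eRk (U ∪ C) + (S.length + 1)
        = (M.eRk (U ∪ C) + 1) + S.length := by ring
      _ ≤ (M.eRk U + (C \ U).encard) + S.length :=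
        add_le_add_left ((hX C hCX).eRk_union_add_one_le hCU) _
      _ = (C \ U).encard + (M.eRk U + S.length) := by ring
      _ ≤ (C \ U).encard + U.encard := add_le_add_right (ih hS) _
      _ = (U ∪ C).encard := by rw [encard_sdiff_add_encard, union_comm]

lemma eRk_add_length_le (hX : ∀ C ∈ X, M.IsCircuit C) (hS : ProperSeq X S) (F : Set α) :
    M.eRk F + S.length ≤ (F ∪ unionList S).encard := by
  set U := unionList S
  calc M.eRk F + S.length ≤ M.eRk (U ∪ F) + S.length :=
        add_le_add_left (M.eRk_mono subset_union_right) _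
    _ ≤ (M.eRk U + (F \ U).encard) + S.length := by
        rw [← union_sdiff_self]
        exact add_le_add_left (M.eRk_union_le_eRk_add_encard U (F \ U)) _
    _ = (F \ U).encard + (M.eRk U + S.length) := by ring
    _ ≤ (F \ U).encard + U.encard := add_le_add_right (hS.eRk_unionList_add_length_le hX) _
    _ = (F ∪ U).encard := encard_sdiff_add_encard F U

lemma mrk_le_valSeq (hE : M.E.Finite) (hX : ∀ C ∈ X, M.IsCircuit C) (hS : ProperSeq X S)
    {F : Set α} (hF : F ⊆ M.E) : (mrk M F : ℤ) ≤ valSeq F S := by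
  have hFU : (F ∪ unionList S).Finite :=
    hE.subset (union_subset hF (unionList_subset fun Y hY => (hX Y (hS.1 Y hY)).subset_ground))
  have h := hS.eRk_add_length_le hX F
  rw [← M.cast_mrk_eq_eRk (hE.subset hF), ← hFU.cast_ncard_eq] at h
  have h' : mrk M F + S.length ≤ (F ∪ unionList S).ncard := by exact_mod_cast h
  rw [valSeq]
  omega

end ProperSeq

section valX

variable {M : Matroid α} {X : Set (Set α)} {F : Set α}

lemma mrk_le_valX (hE : M.E.Finite) (hX : ∀ C ∈ X, M.IsCircuit C) (hF : F ⊆ M.E) :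
    (mrk M F : ℤ) ≤ valX X F :=
  le_csInf ⟨_, [], properSeq_nil X, rfl⟩ fun _ ⟨_, hS, hv⟩ => hv ▸ hS.mrk_le_valSeq hE hX hF

/-- `valX` is an `sInf` in `ℤ`, a junk value unless bounded below; a matroid in which every member
of `X` is a circuit supplies the lower bound `mrk M F`. -/
lemma valX_le_valSeq (hE : M.E.Finite) (hX : ∀ C ∈ X, M.IsCircuit C) (hF : F ⊆ M.E)
    {S : List (Set α)} (hS : ProperSeq X S) : valX X F ≤ valSeq F S :=
  csInf_le ⟨mrk M F, fun _ ⟨_, hT, hv⟩ => hv ▸ hT.mrk_le_valSeq hE hX hF⟩ ⟨S, hS, rfl⟩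

lemma valX_lt_ncard_of_mem (hE : M.E.Finite) (hX : ∀ C ∈ X, M.IsCircuit C) {C : Set α}
    (hC : C ∈ X) : valX X C < C.ncard := by
  have h := valX_le_valSeq hE hX (hX C hC).subset_ground (properSeq_singleton hC)
  rw [valSeq, unionList_singleton, union_self, List.length_singleton] at h
  omega

end valX

theorem valX_submodular_unique_maximal_general (E : Set α) (hE : E.Finite) (X : Set (Set α))
    (MX : Matroid α) (hMXE : MX.E = E) (hMXr : ∀ F ⊆ E, (mrk MX F : ℤ) = valX X F)
    (hexists : ∃ N : Matroid α, IsXMatroid E X N) :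
    IsXMatroid E X MX ∧ ∀ M : Matroid α, IsXMatroid E X M → WeakLE M MX := by
  have hcircuits : ∀ M, IsXMatroid E X M → ∀ C ∈ X, M.IsCircuit C :=
    fun M hM C hC => Matroid.isCircuit'_iff.1 (hM.2 C hC)
  have hweak : ∀ M, IsXMatroid E X M → WeakLE M MX := by
    intro M hM I hI
    have hIE : I ⊆ E := hM.1 ▸ hI.subset_ground
    have hIfin : I.Finite := hE.subset hIE
    have h := mrk_le_valX (hM.1 ▸ hE) (hcircuits M hM) hI.subset_ground
    rw [hI.mrk_eq_ncard hIfin, ← hMXr I hIE] at h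
    exact Matroid.indep_of_ncard_le_mrk hIfin (by exact_mod_cast h)
  obtain ⟨N, hN⟩ := hexists
  refine ⟨⟨hMXE, fun C hCX => Matroid.isCircuit'_iff.2 ?_⟩, hweak⟩
  have hC : N.IsCircuit C := hcircuits N hN C hCX
  have hCE : C ⊆ E := hN.1 ▸ hC.subset_ground
  refine Matroid.isCircuit_iff_dep_forall_sdiff_singleton_indep.2
    ⟨⟨fun hCind => ?_, hMXE ▸ hCE⟩, fun e he => hweak N hN _ (hC.sdiff_singleton_indep he)⟩
  have h := valX_lt_ncard_of_mem (hN.1 ▸ hE) (hcircuits N hN) hCX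
  rw [← hMXr C hCE, hCind.mrk_eq_ncard (hE.subset hCE)] at h
  exact lt_irrefl _ h

theorem valX_submodular_unique_maximal (E : Set α) (hE : E.Finite) (X : Set (Set α))
    (hXE : ∀ Y ∈ X, Y ⊆ E)
    (hsub : ∀ A ⊆ E, ∀ B ⊆ E,
      valX X (A ∪ B) + valX X (A ∩ B) ≤ valX X A + valX X B)
    (MX : Matroid α) (hMXE : MX.E = E) (hMXr : ∀ F ⊆ E, (mrk MX F : ℤ) = valX X F)
    (hexists : ∃ N : Matroid α, IsXMatroid E X N) :
    IsXMatroid E X MX ∧ ∀ M : Matroid α, IsXMatroid E X M → WeakLE M MX :=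
  valX_submodular_unique_maximal_general E hE X MX hMXE hMXr hexists
end

section
/- Let X be a k-uniform, union-stable family of subsets of E = ⋃_{X₀∈X} X₀. Suppose E can be constructed by a weakly X-saturated sequence from some Y ⊆ E with |Y| = k and Y ∉ X. Then the matroid U_X (independent sets: all F with |F| ≤ k and F ∉ X) is the unique maximal X-matroid on E, and its rank function equals val_X. -/
open Set

variable {α : Type*}

/-- A weakly `X`-saturated sequence from `F₀`: a proper `X`-sequence each of whose terms has
exactly one element outside `F₀` and the previous terms. -/
def WeaklySat (X : Set (Set α)) (F₀ : Set α) (S : List (Set α)) : Prop :=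
  ProperSeq X S ∧ ∀ i : Fin S.length, (S.get i \ (F₀ ∪ unionList (S.take i.1))).ncard = 1
/-- A `k`-uniform family is union-stable if for all `X₁ X₂ ∈ X` and `e ∈ X₁ ∩ X₂`,
either `|(X₁ ∪ X₂) - e| > k` or `(X₁ ∪ X₂) - e ∈ X`. -/
def UnionStable (X : Set (Set α)) (k : ℕ) : Prop :=
  ∀ X₁ ∈ X, ∀ X₂ ∈ X, ∀ e ∈ X₁ ∩ X₂,
    k < ((X₁ ∪ X₂) \ {e}).ncard ∨ (X₁ ∪ X₂) \ {e} ∈ X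


@[simp] lemma unionList_append_singleton (S : List (Set α)) (C : Set α) :
    unionList (S ++ [C]) = unionList S ∪ C := by
  simp [unionList, iUnion_or, iUnion_union_distrib]

lemma unionList_subset_iff {S : List (Set α)} {B : Set α} :
    unionList S ⊆ B ↔ ∀ Y ∈ S, Y ⊆ B :=
  iUnion₂_subset_iff

lemma Matroid.isCircuit'_iff_s7 {M : Matroid α} {C : Set α} : M.IsCircuit' C ↔ M.IsCircuit C := by
  rw [isCircuit_iff_dep_forall_sdiff_singleton_indep, Dep, IsCircuit']
  tauto

section Sequences

variable {X : Set (Set α)} {Y : Set α} {S T : List (Set α)} {C : Set α}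

lemma ProperSeq.nil : ProperSeq X [] :=
  ⟨by simp, fun i => i.elim0⟩

lemma ProperSeq.unionList_subset {E : Set α} (hS : ProperSeq X S) (hXE : ∀ C ∈ X, C ⊆ E) :
    unionList S ⊆ E :=
  unionList_subset_iff.2 fun C hC => hXE C (hS.1 C hC)

theorem properSeq_append_singleton_iff :
    ProperSeq X (T ++ [C]) ↔ ProperSeq X T ∧ C ∈ X ∧ (T ≠ [] → ¬ C ⊆ unionList T) := by
  simp only [ProperSeq, List.get_eq_getElem, Fin.forall_iff, List.length_append,
    List.length_singleton, List.mem_append, List.mem_singleton]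
  constructor
  · rintro ⟨hmem, hnew⟩
    refine ⟨⟨fun Y hY => hmem Y (.inl hY), fun i hi hi0 => ?_⟩, hmem C (.inr rfl), fun hT => ?_⟩
    · simpa [List.getElem_append_left hi, List.take_append_of_le_length hi.le] using
        hnew i (by omega) hi0
    · simpa using hnew T.length (by omega) (List.length_pos_iff.2 hT)
  · rintro ⟨⟨hmem, hnew⟩, hC, hlast⟩
    refine ⟨?_, fun i hi hi0 => ?_⟩
    · rintro Y (hY | rfl)
      exacts [hmem Y hY, hC]
    · rcases Nat.lt_or_ge i T.length with hiT | hiT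
      · simpa [List.getElem_append_left hiT, List.take_append_of_le_length hiT.le] using
          hnew i hiT hi0
      · obtain rfl : i = T.length := by omega
        simpa using hlast (List.length_pos_iff.1 hi0)

theorem WeaklySat.of_append_singleton (h : WeaklySat X Y (T ++ [C])) :
    WeaklySat X Y T ∧ C ∈ X ∧ ∃ e ∈ C, e ∉ Y ∪ unionList T ∧ C ⊆ insert e (Y ∪ unionList T) := by
  obtain ⟨hT, hC, -⟩ := properSeq_append_singleton_iff.1 h.1
  have hone := h.2
  simp only [List.get_eq_getElem, Fin.forall_iff, List.length_append,
    List.length_singleton] at hone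
  refine ⟨⟨hT, fun ⟨i, hi⟩ => ?_⟩, hC, ?_⟩
  · simpa [List.getElem_append_left hi, List.take_append_of_le_length hi.le] using
      hone i (by omega)
  · obtain ⟨e, he⟩ := ncard_eq_one.1 (by simpa using hone T.length (by omega))
    have heC : e ∈ C \ (Y ∪ unionList T) := he ▸ rfl
    exact ⟨e, heC.1, heC.2, union_singleton (a := e) ▸ sdiff_subset_iff.1 he.subset⟩

theorem WeaklySat.ncard_union (hS : WeaklySat X Y S) (hfin : (Y ∪ unionList S).Finite) :
    (Y ∪ unionList S).ncard = Y.ncard + S.length := by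
  induction S using List.reverseRecOn with
  | nil => simp
  | append_singleton T C ih =>
    obtain ⟨hT, -, e, heC, heT, hCe⟩ := hS.of_append_singleton
    rw [unionList_append_singleton, ← union_assoc] at hfin ⊢
    have hins : Y ∪ unionList T ∪ C = insert e (Y ∪ unionList T) :=
      (union_subset (subset_insert e _) hCe).antisymm (insert_subset (.inr heC) subset_union_left)
    have hTfin := hfin.subset subset_union_left
    rw [hins, ncard_insert_of_notMem heT hTfin, ih hT hTfin, List.length_append,
      List.length_singleton, add_assoc]

theorem WeaklySat.union_subset_closure {M : Matroid α} (hX : ∀ C ∈ X, M.IsCircuit' C)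
    (hS : WeaklySat X Y S) (hY : Y ⊆ M.E) : Y ∪ unionList S ⊆ M.closure Y := by
  induction S using List.reverseRecOn with
  | nil => simpa using M.subset_closure Y hY
  | append_singleton T C ih =>
    obtain ⟨hT, hCX, e, -, -, hCe⟩ := hS.of_append_singleton
    have hTcl := ih hT
    have hCcl : C ⊆ M.closure Y :=
      ((Matroid.isCircuit'_iff_s7.1 (hX C hCX)).subset_closure_sdiff_singleton e).trans
        (M.closure_subset_closure_of_subset_closure ((sdiff_singleton_subset_iff.2 hCe).trans hTcl))
    rw [unionList_append_singleton, ← union_assoc]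
    exact union_subset hTcl hCcl

theorem ProperSeq.eRk_add_length_le_s7 {M : Matroid α} (hX : ∀ C ∈ X, M.IsCircuit' C)
    (hS : ProperSeq X S) {A : Set α} (hSA : unionList S ⊆ A) :
    M.eRk A + S.length ≤ A.encard := by
  induction S using List.reverseRecOn generalizing A with
  | nil => simpa using M.eRk_le_encard A
  | append_singleton T C ih =>
    obtain ⟨hT, hCX, hnew⟩ := properSeq_append_singleton_iff.1 hS
    have hC := Matroid.isCircuit'_iff_s7.1 (hX C hCX)
    rw [unionList_append_singleton, union_subset_iff] at hSA
    obtain ⟨e, heC, heT⟩ : ∃ e ∈ C, e ∉ unionList T := by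
      rcases eq_or_ne T [] with rfl | hT0
      · obtain ⟨e, he⟩ := hC.nonempty
        exact ⟨e, he, by simp⟩
      · exact not_subset.1 (hnew hT0)
    have hecl : e ∈ M.closure (A \ {e}) :=
      M.closure_subset_closure (sdiff_subset_sdiff_left hSA.2)
        (hC.mem_closure_sdiff_singleton_of_mem heC)
    have hrk : M.eRk A = M.eRk (A \ {e}) := by
      rw [← M.eRk_closure_eq, ← M.eRk_closure_eq (A \ {e}),
        ← M.closure_insert_eq_of_mem_closure hecl, insert_sdiff_self_of_mem (hSA.2 heC)]
    have hT' := ih hT (subset_sdiff_singleton hSA.1 heT)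
    rw [← encard_sdiff_singleton_add_one (hSA.2 heC), hrk, List.length_append,
      List.length_singleton, Nat.cast_add, Nat.cast_one, ← add_assoc]
    gcongr

end Sequences

section Rank

variable {M : Matroid α} {F I : Set α}

lemma bddAbove_indep_ncard (M : Matroid α) (hF : F.Finite) :
    BddAbove {n : ℕ | ∃ I ⊆ F, M.Indep I ∧ I.ncard = n} :=
  ⟨F.ncard, by rintro _ ⟨I, hIF, -, rfl⟩; exact ncard_le_ncard hIF hF⟩

lemma ncard_le_mrk (hF : F.Finite) (hIF : I ⊆ F) (hI : M.Indep I) : I.ncard ≤ mrk M F :=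
  le_csSup (bddAbove_indep_ncard M hF) ⟨I, hIF, hI, rfl⟩

lemma exists_indep_ncard_eq_mrk (M : Matroid α) (hF : F.Finite) :
    ∃ I ⊆ F, M.Indep I ∧ I.ncard = mrk M F :=
  Nat.sSup_mem (s := {n : ℕ | ∃ I ⊆ F, M.Indep I ∧ I.ncard = n})
    ⟨0, ∅, empty_subset F, M.empty_indep, ncard_empty α⟩ (bddAbove_indep_ncard M hF)

theorem mrk_le_valSeq {X : Set (Set α)} (hX : ∀ C ∈ X, M.IsCircuit' C) {S : List (Set α)}
    (hS : ProperSeq X S) (hfin : (F ∪ unionList S).Finite) : (mrk M F : ℤ) ≤ valSeq F S := by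
  obtain ⟨I, hIF, hI, hIr⟩ := exists_indep_ncard_eq_mrk M (hfin.subset subset_union_left)
  have hIS : I ⊆ F ∪ unionList S := hIF.trans subset_union_left
  have h : I.encard + S.length ≤ (F ∪ unionList S).encard :=
    (add_le_add (hI.encard_le_eRk_of_subset hIS) le_rfl).trans
      (hS.eRk_add_length_le_s7 hX subset_union_right)
  rw [← (hfin.subset hIS).cast_ncard_eq, ← hfin.cast_ncard_eq] at h
  norm_cast at h
  rw [valSeq, ← hIr]
  omega

end Rank

theorem valX_eq_of_forall_le {X : Set (Set α)} {F : Set α} {r : ℤ}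
    (hle : ∀ S, ProperSeq X S → r ≤ valSeq F S) (hr : ∃ S, ProperSeq X S ∧ valSeq F S ≤ r) :
    valX X F = r := by
  obtain ⟨S, hS, hSr⟩ := hr
  have hlb : r ∈ lowerBounds {v : ℤ | ∃ S, ProperSeq X S ∧ v = valSeq F S} := by
    rintro _ ⟨T, hT, rfl⟩
    exact hle T hT
  exact le_antisymm ((csInf_le ⟨r, hlb⟩ ⟨S, hS, rfl⟩).trans hSr) (le_csInf ⟨_, S, hS, rfl⟩ hlb)

theorem exists_properSeq_of_insert_mem {X : Set (Set α)} {P D : Set α} (hD : D.Finite)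
    (hPD : Disjoint P D) (hX : ∀ a ∈ D, insert a P ∈ X) :
    ∃ S, ProperSeq X S ∧ unionList S ⊆ P ∪ D ∧ S.length = D.ncard := by
  induction D, hD using Set.Finite.induction_on with
  | empty => exact ⟨[], ProperSeq.nil, by simp, by simp⟩
  | @insert a D haD hD ih =>
    obtain ⟨S, hS, hSPD, hSlen⟩ :=
      ih (hPD.mono_right (subset_insert a D)) fun b hb => hX b (.inr hb)
    have haP : a ∉ P := fun h => hPD.ne_of_mem h (mem_insert a D) rfl
    refine ⟨S ++ [insert a P], properSeq_append_singleton_iff.2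
      ⟨hS, hX a (mem_insert a D), fun _ hsub => ?_⟩, ?_, ?_⟩
    · rcases hSPD (hsub (mem_insert a P)) with h | h
      exacts [haP h, haD h]
    · rw [unionList_append_singleton]
      exact union_subset (hSPD.trans (union_subset_union_right _ (subset_insert a D)))
        (insert_subset (.inr (mem_insert a D)) subset_union_left)
    · rw [ncard_insert_of_notMem haD hD, List.length_append, List.length_singleton, hSlen]

theorem exists_properSeq_valSeq_eq {X : Set (Set α)} {P F : Set α} (hF : F.Finite)
    (hPF : P ⊆ F) (hX : ∀ a ∈ F \ P, insert a P ∈ X) :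
    ∃ S, ProperSeq X S ∧ valSeq F S = P.ncard := by
  obtain ⟨S, hS, hSF, hlen⟩ := exists_properSeq_of_insert_mem hF.sdiff disjoint_sdiff_right hX
  rw [union_sdiff_cancel hPF] at hSF
  refine ⟨S, hS, ?_⟩
  have hcard := ncard_sdiff_add_ncard_of_subset hPF hF
  rw [valSeq, union_eq_self_of_subset_right hSF, hlen]
  omega

section UniformFamily

variable {E : Set α} {X : Set (Set α)} {k : ℕ} {U : Matroid α}

lemma indep_of_ncard_lt (hk : ∀ C ∈ X, C.ncard = k)
    (hUI : ∀ F, U.Indep F ↔ F ⊆ E ∧ F.ncard ≤ k ∧ F ∉ X) {F : Set α} (hF : F ⊆ E)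
    (hFk : F.ncard < k) : U.Indep F :=
  (hUI F).2 ⟨hF, hFk.le, fun hFX => hFk.ne (hk F hFX)⟩

theorem isCircuit'_of_mem (hE : E.Finite) (hk : ∀ C ∈ X, C.ncard = k) (hXE : ∀ C ∈ X, C ⊆ E)
    (hUE : U.E = E) (hUI : ∀ F, U.Indep F ↔ F ⊆ E ∧ F.ncard ≤ k ∧ F ∉ X) {C : Set α}
    (hC : C ∈ X) : U.IsCircuit' C := by
  have hCfin := hE.subset (hXE C hC)
  refine ⟨hUE ▸ hXE C hC, fun hCI => ((hUI C).1 hCI).2.2 hC, fun e he =>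
    indep_of_ncard_lt hk hUI (sdiff_subset.trans (hXE C hC)) ?_⟩
  have hpos : 0 < k := hk C hC ▸ (ncard_pos hCfin).2 ⟨e, he⟩
  rw [ncard_sdiff_singleton_of_mem he, hk C hC]
  omega

theorem weakLE_of_ground_subset_closure (hE : E.Finite)
    (hUI : ∀ F, U.Indep F ↔ F ⊆ E ∧ F.ncard ≤ k ∧ F ∉ X) {M : Matroid α}
    (hM : IsXMatroid E X M) {Y : Set α} (hY : Y ⊆ E) (hYk : Y.ncard ≤ k)
    (hEY : E ⊆ M.closure Y) : WeakLE M U := by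
  obtain ⟨hME, hMX⟩ := hM
  intro I hI
  have hIE : I ⊆ E := hME ▸ hI.subset_ground
  have hIY : I.encard ≤ Y.encard := calc
    I.encard ≤ M.eRk (M.closure Y) := hI.encard_le_eRk_of_subset (hIE.trans hEY)
    _ = M.eRk Y := M.eRk_closure_eq Y
    _ ≤ Y.encard := M.eRk_le_encard Y
  rw [← (hE.subset hIE).cast_ncard_eq, ← (hE.subset hY).cast_ncard_eq, Nat.cast_le] at hIY
  exact (hUI I).2 ⟨hIE, hIY.trans hYk, fun hIX => (hMX I hIX).2.1 hI⟩

theorem exists_properSeq_valSeq_le_mrk (hE : E.Finite) (hk : ∀ C ∈ X, C.ncard = k)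
    (hXE : ∀ C ∈ X, C ⊆ E) (hUI : ∀ F, U.Indep F ↔ F ⊆ E ∧ F.ncard ≤ k ∧ F ∉ X)
    {W : List (Set α)} (hW : ProperSeq X W) (hEW : E.ncard = k + W.length) {F : Set α}
    (hF : F ⊆ E) : ∃ S, ProperSeq X S ∧ valSeq F S ≤ mrk U F := by
  have hFfin := hE.subset hF
  by_cases hFI : U.Indep F
  · exact ⟨[], .nil, by simpa [valSeq] using ncard_le_mrk hFfin subset_rfl hFI⟩
  by_cases hC : ∃ C ⊆ F, C.ncard = k ∧ C ∉ X
  · obtain ⟨C, hCF, hCk, hCX⟩ := hC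
    have hkr := ncard_le_mrk hFfin hCF ((hUI C).2 ⟨hCF.trans hF, hCk.le, hCX⟩)
    have := ncard_le_ncard (union_subset hF (hW.unionList_subset hXE)) hE
    refine ⟨W, hW, ?_⟩
    rw [valSeq]
    omega
  push Not at hC
  have hkF : k ≤ F.ncard := not_lt.1 fun h => hFI (indep_of_ncard_lt hk hUI hF h)
  have hk1 : 1 ≤ k := by
    by_contra! h
    exact ((hUI ∅).1 U.empty_indep).2.2 (hC ∅ (empty_subset F) (by simp; omega))
  obtain ⟨P, hPF, hPk⟩ := exists_subset_card_eq (show k - 1 ≤ F.ncard by omega)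
  obtain ⟨S, hS, hSP⟩ := exists_properSeq_valSeq_eq hFfin hPF fun a ha =>
    hC _ (insert_subset ha.1 hPF) (by rw [ncard_insert_of_notMem ha.2 (hFfin.subset hPF)]; omega)
  refine ⟨S, hS, ?_⟩
  rw [hSP, Nat.cast_le]
  exact ncard_le_mrk hFfin hPF (indep_of_ncard_lt hk hUI (hPF.trans hF) (by omega))

end UniformFamily

theorem weaklySat_unique_maximal_UX_general (E : Set α) (hE : E.Finite) (X : Set (Set α))
    (hEX : E = (⋃ X₀ ∈ X, X₀)) (k : ℕ) (hk : ∀ Y ∈ X, Y.ncard = k)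
    (Y : Set α) (hYcard : Y.ncard = k)
    (hsat : ∃ S : List (Set α), WeaklySat X Y S ∧ Y ∪ unionList S = E)
    (U : Matroid α) (hUE : U.E = E)
    (hUI : ∀ F : Set α, U.Indep F ↔ F ⊆ E ∧ F.ncard ≤ k ∧ F ∉ X) :
    IsXMatroid E X U ∧ (∀ M : Matroid α, IsXMatroid E X M → WeakLE M U) ∧
    ∀ F ⊆ E, (mrk U F : ℤ) = valX X F := by
  obtain ⟨W, hW, hWE⟩ := hsat
  have hXE : ∀ C ∈ X, C ⊆ E := fun C hC x hx => hEX ▸ mem_biUnion hC hx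
  have hUX : IsXMatroid E X U := ⟨hUE, fun C hC => isCircuit'_of_mem hE hk hXE hUE hUI hC⟩
  have hYE : Y ⊆ E := hWE ▸ subset_union_left
  have hEW : E.ncard = k + W.length := by
    rw [← hYcard, ← hW.ncard_union (hWE ▸ hE), hWE]
  refine ⟨hUX, fun M hM => ?_, fun F hF => ?_⟩
  · exact weakLE_of_ground_subset_closure hE hUI hM hYE hYcard.le
      (hWE ▸ hW.union_subset_closure hM.2 (hM.1 ▸ hYE))
  · have hfin (S : List (Set α)) (hS : ProperSeq X S) : (F ∪ unionList S).Finite :=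
      hE.subset (union_subset hF (hS.unionList_subset hXE))
    exact (valX_eq_of_forall_le (fun S hS => mrk_le_valSeq hUX.2 hS (hfin S hS))
      (exists_properSeq_valSeq_le_mrk hE hk hXE hUI hW.1 hEW hF)).symm

theorem weaklySat_unique_maximal_UX (E : Set α) (hE : E.Finite) (X : Set (Set α))
    (hEX : E = (⋃ X₀ ∈ X, X₀)) (k : ℕ) (hk : ∀ Y ∈ X, Y.ncard = k)
    (hstable : UnionStable X k)
    (Y : Set α) (hY : Y ⊆ E) (hYcard : Y.ncard = k) (hYX : Y ∉ X)
    (hsat : ∃ S : List (Set α), WeaklySat X Y S ∧ Y ∪ unionList S = E)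
    (U : Matroid α) (hUE : U.E = E)
    (hUI : ∀ F : Set α, U.Indep F ↔ F ⊆ E ∧ F.ncard ≤ k ∧ F ∉ X) :
    IsXMatroid E X U ∧ (∀ M : Matroid α, IsXMatroid E X M → WeakLE M U) ∧
    ∀ F ⊆ E, (mrk U F : ℤ) = valX X F :=
  weaklySat_unique_maximal_UX_general E hE X hEX k hk Y hYcard hsat U hUE hUI
end

section
/- Let M be a matroid on E(K_n) in which every copy of K₄ is a circuit and which has the 0-extension property. Then every circuit of M induces a 2-connected subgraph of K_n. -/
open Set

variable {α : Type*}

/-- The set of vertices incident to a set of edges. -/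
def verts {V : Type*} (F : Set (Sym2 V)) : Set V := {v | ∃ e ∈ F, v ∈ e}

/-- The edge sets of matchings with exactly `k` edges in the complete graph `K_n`. -/
def matchingCopies (n k : ℕ) : Set (Set (Sym2 (Fin n))) :=
  {F | F ⊆ (⊤ : SimpleGraph (Fin n)).edgeSet ∧ F.ncard = k ∧
       ∀ e ∈ F, ∀ f ∈ F, e ≠ f → ∀ v : Fin n, v ∈ e → v ∉ f}
/-- The matroid `M` on the edge set of `G` has the 0-extension property: adding a new vertex
(one not incident to the given independent set) joined by two edges to distinct vertices
preserves independence. -/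
def ZeroExtProperty {V : Type*} (G : SimpleGraph V) (M : Matroid (Sym2 V)) : Prop :=
  ∀ F : Set (Sym2 V), M.Indep F → ∀ v₀ v₁ v₂ : V, v₁ ≠ v₂ → v₀ ∉ verts F →
    G.Adj v₀ v₁ → G.Adj v₀ v₂ → M.Indep (F ∪ {s(v₀, v₁), s(v₀, v₂)})

/-- A set of edges induces a 2-connected graph: any splitting of the edges into two nonempty
parts shares at least two vertices. -/
def TwoConnEdgeSet {V : Type*} (C : Set (Sym2 V)) : Prop :=
  ∀ X Y : Set (Sym2 V), X ∪ Y = C → Disjoint X Y → X.Nonempty → Y.Nonempty →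
    2 ≤ (verts X ∩ verts Y).ncard
/-- The edge sets of subgraphs of `K_n` isomorphic to a graph `H` on `s` vertices. -/
def graphCopies {s : ℕ} (H : SimpleGraph (Fin s)) (n : ℕ) : Set (Set (Sym2 (Fin n))) :=
  {F | ∃ φ : Fin s ↪ Fin n, F = Sym2.map φ '' H.edgeSet}

/-!
Split a circuit `C` into nonempty parts `X`, `Y` whose vertex sets `U`, `W` share at most one
vertex; after adding a vertex of `U` to `W` they share exactly one, `v`. For a second vertex `u`
of `U`, the edges of the complete graph on `U` meeting `v` or `u` span all of it, since any other
edge `ab` lies in the K₄ on `{v, u, a, b}`, a circuit. The two such double fans on `U` and `W`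
(poles `v, u` and `v, w`) are built up together by 0-extensions, so their union is independent.
Hence the closures of the two double fans are skew, and the independent proper subsets `X` and `Y`
of `C` would have the independent union `C`.
-/

namespace Matroid

variable {M : Matroid α} {C I J X Y : Set α}

theorem IsCircuit'.isCircuit (hC : M.IsCircuit' C) : M.IsCircuit C :=
  isCircuit_iff_dep_forall_sdiff_singleton_indep.2 ⟨⟨hC.2.1, hC.1⟩, hC.2.2⟩

theorem union_indep_of_subset_closure [M.RankFinite] (hIJ : M.Indep (I ∪ J))
    (hdisj : Disjoint I J) (hX : M.Indep X) (hXI : X ⊆ M.closure I) (hY : M.Indep Y)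
    (hYJ : Y ⊆ M.closure J) : M.Indep (X ∪ Y) := by
  obtain ⟨BX, hBX, hXBX⟩ := hX.subset_isBasis_of_subset hXI
  obtain ⟨BY, hBY, hYBY⟩ := hY.subset_isBasis_of_subset hYJ
  have hI := hIJ.subset subset_union_left
  have hJ := hIJ.subset subset_union_right
  have hIBX : I ⊆ M.closure BX := by
    rw [hBX.closure_eq_closure, closure_closure]; exact M.subset_closure I
  have hJBY : J ⊆ M.closure BY := by
    rw [hBY.closure_eq_closure, closure_closure]; exact M.subset_closure J
  have hspan : I ∪ J ⊆ M.closure (BX ∪ BY) :=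
    union_subset (hIBX.trans (M.closure_subset_closure subset_union_left))
      (hJBY.trans (M.closure_subset_closure subset_union_right))
  refine ((M.isRkFinite_set _).indep_of_encard_le_eRk ?_).subset (union_subset_union hXBX hYBY)
  calc (BX ∪ BY).encard ≤ BX.encard + BY.encard := encard_union_le _ _
    _ = I.encard + J.encard := by
      rw [hBX.encard_eq_eRk, hBY.encard_eq_eRk, eRk_closure_eq, eRk_closure_eq,
        hI.eRk_eq_encard, hJ.eRk_eq_encard]
    _ = (I ∪ J).encard := (encard_union_eq hdisj).symm
    _ ≤ M.eRk (M.closure (BX ∪ BY)) := hIJ.encard_le_eRk_of_subset hspan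
    _ = M.eRk (BX ∪ BY) := M.eRk_closure_eq _

end Matroid

section Cliques

variable {V : Type*}

def cliqueEdges (U : Set V) : Set (Sym2 V) := (⊤ : SimpleGraph V).edgeSet ∩ U.sym2

/-- For poles `p ≠ q` in `U`: the edge `s(p, q)` and the two edges joining every other vertex
of `U` to the poles. -/
def doubleFan (U : Set V) (p q : V) : Set (Sym2 V) := {e ∈ cliqueEdges U | p ∈ e ∨ q ∈ e}

@[simp]
theorem mk_mem_cliqueEdges {U : Set V} {x y : V} :
    s(x, y) ∈ cliqueEdges U ↔ x ≠ y ∧ x ∈ U ∧ y ∈ U := by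
  simp [cliqueEdges]

theorem cliqueEdges_mono {U W : Set V} (h : U ⊆ W) : cliqueEdges U ⊆ cliqueEdges W :=
  inter_subset_inter_right _ fun _ he => mem_sym2_iff_subset.2 ((mem_sym2_iff_subset.1 he).trans h)

theorem disjoint_cliqueEdges {U W : Set V} (h : (U ∩ W).Subsingleton) :
    Disjoint (cliqueEdges U) (cliqueEdges W) := by
  refine disjoint_left.2 <| Sym2.ind fun x y heU heW => ?_
  simp only [mk_mem_cliqueEdges] at heU heW
  exact heU.1 (h ⟨heU.2.1, heW.2.1⟩ ⟨heU.2.2, heW.2.2⟩)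

theorem doubleFan_subset_cliqueEdges (U : Set V) (p q : V) : doubleFan U p q ⊆ cliqueEdges U :=
  sep_subset _ _

theorem verts_subset_iff {F : Set (Sym2 V)} {S : Set V} : verts F ⊆ S ↔ F ⊆ S.sym2 := by
  simp only [verts, subset_def, mem_sym2_iff_subset, SetLike.mem_coe]
  exact ⟨fun h e he v hv => h v ⟨e, he, hv⟩, fun h v ⟨e, he, hv⟩ => h e he v hv⟩

theorem verts_union (F G : Set (Sym2 V)) : verts (F ∪ G) = verts F ∪ verts G := by
  ext v
  simp only [verts, mem_union, mem_ofPred_eq, or_and_right, exists_or]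

theorem verts_doubleFan_subset (U : Set V) (p q : V) : verts (doubleFan U p q) ⊆ U :=
  verts_subset_iff.2 ((doubleFan_subset_cliqueEdges U p q).trans inter_subset_right)

theorem subset_cliqueEdges_verts {F : Set (Sym2 V)} (hF : F ⊆ (⊤ : SimpleGraph V).edgeSet) :
    F ⊆ cliqueEdges (verts F) :=
  subset_inter hF (verts_subset_iff.1 subset_rfl)

theorem verts_nontrivial {F : Set (Sym2 V)} (hF : F ⊆ (⊤ : SimpleGraph V).edgeSet)
    (hne : F.Nonempty) : (verts F).Nontrivial := by
  obtain ⟨e, he⟩ := hne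
  induction e using Sym2.ind with
  | h x y => exact ⟨x, ⟨_, he, by simp⟩, y, ⟨_, he, by simp⟩, by simpa using hF he⟩

theorem image_map_edgeSet_top {W : Type*} {f : W → V} (hf : Function.Injective f) :
    Sym2.map f '' (⊤ : SimpleGraph W).edgeSet = cliqueEdges (range f) := by
  ext e
  induction e using Sym2.ind with
  | h x y =>
    constructor
    · rintro ⟨e', he', hmap⟩
      induction e' using Sym2.ind with
      | h i j =>
        rw [Sym2.map_mk] at hmap
        rw [← hmap, mk_mem_cliqueEdges]
        exact ⟨hf.ne (by simpa using he'), mem_range_self i, mem_range_self j⟩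
    · rintro ⟨hxy, ⟨i, rfl⟩, ⟨j, rfl⟩⟩
      exact ⟨s(i, j), by simpa using fun hij => hxy (by simp [hij]), Sym2.map_mk f i j⟩

theorem cliqueEdges_pair_subset (a b : V) : cliqueEdges {a, b} ⊆ {s(a, b)} := by
  intro e he
  induction e using Sym2.ind with
  | h x y =>
    simp only [mk_mem_cliqueEdges, mem_insert_iff, mem_singleton_iff] at he
    aesop

theorem doubleFan_insert {S : Set V} {p q z : V} (hp : p ∈ S) (hq : q ∈ S) (hzp : z ≠ p)
    (hzq : z ≠ q) : doubleFan (insert z S) p q = doubleFan S p q ∪ {s(z, p), s(z, q)} := by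
  ext e
  induction e using Sym2.ind with
  | h x y =>
    simp only [doubleFan, mem_union, mem_sep_iff, mk_mem_cliqueEdges, mem_insert_iff,
      mem_singleton_iff, Sym2.mem_iff, Sym2.eq_iff]
    aesop

end Cliques

section ZeroExtension

variable {V : Type*} {M : Matroid (Sym2 V)}

theorem indep_union_doubleFan_union (hze : ZeroExtProperty (⊤ : SimpleGraph V) M)
    {F : Set (Sym2 V)} {S T : Set V} {p q : V} (hp : p ∈ S) (hq : q ∈ S) (hpq : p ≠ q)
    (hT : T.Finite) (hTF : Disjoint T (verts F)) (hTS : Disjoint T S)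
    (hF : M.Indep (F ∪ doubleFan S p q)) : M.Indep (F ∪ doubleFan (S ∪ T) p q) := by
  induction T, hT using Set.Finite.induction_on with
  | empty => simpa using hF
  | @insert z T hzT _ ih =>
    rw [disjoint_insert_left] at hTF hTS
    have hzp : z ≠ p := ne_of_mem_of_not_mem hp hTS.1 |>.symm
    have hzq : z ≠ q := ne_of_mem_of_not_mem hq hTS.1 |>.symm
    have hznew : z ∉ verts (F ∪ doubleFan (S ∪ T) p q) := by
      rw [verts_union]
      rintro (h | h)
      · exact hTF.1 h
      · rcases verts_doubleFan_subset _ _ _ h with h | h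
        exacts [hTS.1 h, hzT h]
    rw [union_insert, doubleFan_insert (mem_union_left _ hp) (mem_union_left _ hq) hzp hzq,
      ← union_assoc]
    exact hze _ (ih hTF.2 hTS.2) z p q hpq hznew (by simpa using hzp) (by simpa using hzq)

theorem indep_doubleFan_union_doubleFan (hze : ZeroExtProperty (⊤ : SimpleGraph V) M)
    {U W : Set V} (hU : U.Finite) (hW : W.Finite) {v u w : V} (hUW : U ∩ W ⊆ {v})
    (hvU : v ∈ U) (hvW : v ∈ W) (hu : u ∈ U) (hw : w ∈ W) (huv : u ≠ v) (hwv : w ≠ v) :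
    M.Indep (doubleFan U v u ∪ doubleFan W v w) := by
  have hwU : w ∉ U := fun h => hwv (hUW ⟨h, hw⟩)
  have hseed : M.Indep {s(v, u), s(v, w)} := by
    simpa using hze ∅ M.empty_indep v u w (ne_of_mem_of_not_mem hu hwU) (by simp [verts])
      (by simpa using huv.symm) (by simpa using hwv.symm)
  have hpair (a b : V) : doubleFan {a, b} a b ⊆ {s(a, b)} :=
    (doubleFan_subset_cliqueEdges _ _ _).trans (cliqueEdges_pair_subset a b)
  have hUfan : M.Indep (doubleFan {v, w} v w ∪ doubleFan U v u) := by
    have hUw : Disjoint (U \ {v, u}) (verts (doubleFan {v, w} v w)) := by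
      refine disjoint_left.2 fun x hx hxvw => ?_
      rcases verts_doubleFan_subset _ _ _ hxvw with rfl | rfl
      exacts [hx.2 (mem_insert _ _), hwU hx.1]
    have := indep_union_doubleFan_union hze (mem_insert v {u}) (mem_insert_of_mem v rfl) huv.symm
      hU.sdiff hUw disjoint_sdiff_left <| hseed.subset <| union_subset
        ((hpair v w).trans (by simp)) ((hpair v u).trans (by simp))
    rwa [union_sdiff_cancel (pair_subset hvU hu)] at this
  have hWU : Disjoint (W \ {v, w}) (verts (doubleFan U v u)) := by
    refine disjoint_left.2 fun x hx hxU => ?_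
    exact hx.2 (Or.inl (hUW ⟨verts_doubleFan_subset _ _ _ hxU, hx.1⟩))
  have := indep_union_doubleFan_union hze (mem_insert v {w}) (mem_insert_of_mem v rfl) hwv.symm
    hW.sdiff hWU disjoint_sdiff_left (by rwa [union_comm])
  rwa [union_sdiff_cancel (pair_subset hvW hw)] at this

end ZeroExtension

section K4

variable {n : ℕ} {M : Matroid (Sym2 (Fin n))}

theorem cliqueEdges_mem_graphCopies {s : ℕ} (S : Finset (Fin n)) (hS : S.card = s) :
    cliqueEdges (S : Set (Fin n)) ∈ graphCopies (⊤ : SimpleGraph (Fin s)) n := by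
  refine ⟨(S.orderEmbOfFin hS).toEmbedding, ?_⟩
  rw [image_map_edgeSet_top (S.orderEmbOfFin hS).toEmbedding.injective]
  simp

theorem cliqueEdges_subset_closure_doubleFan
    (hM : IsXMatroid (⊤ : SimpleGraph (Fin n)).edgeSet
      (graphCopies (⊤ : SimpleGraph (Fin 4)) n) M)
    {U : Set (Fin n)} {p q : Fin n} (hp : p ∈ U) (hq : q ∈ U) (hpq : p ≠ q) :
    cliqueEdges U ⊆ M.closure (doubleFan U p q) := by
  refine Sym2.ind fun a b hab => ?_
  by_cases hpole : p ∈ s(a, b) ∨ q ∈ s(a, b)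
  · refine M.subset_closure _ ?_ ⟨hab, hpole⟩
    rw [hM.1]
    exact (doubleFan_subset_cliqueEdges U p q).trans inter_subset_left
  -- `p, q, a, b` span a K₄, a circuit all of whose edges other than `s(a, b)` meet a pole
  rw [mk_mem_cliqueEdges] at hab
  simp only [Sym2.mem_iff, not_or] at hpole
  have hcard : ({p, q, a, b} : Finset (Fin n)).card = 4 := by simp [hpq, hpole, hab]
  have hK := (hM.2 _ (cliqueEdges_mem_graphCopies _ hcard)).isCircuit
  refine M.closure_subset_closure ?_ (hK.mem_closure_sdiff_singleton_of_mem (by simp [hab.1]))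
  refine Sym2.ind fun x y ⟨heK, hne⟩ => ?_
  simp only [Finset.coe_insert, Finset.coe_singleton, mk_mem_cliqueEdges, mem_insert_iff,
    mem_singleton_iff, Sym2.eq_iff] at heK hne
  simp only [doubleFan, mem_sep_iff, mk_mem_cliqueEdges, Sym2.mem_iff]
  aesop

end K4

open Matroid in
theorem K4_matroid_circuits_two_connected (n : ℕ) (M : Matroid (Sym2 (Fin n)))
    (hM : IsXMatroid (⊤ : SimpleGraph (Fin n)).edgeSet
      (graphCopies (⊤ : SimpleGraph (Fin 4)) n) M)
    (hze : ZeroExtProperty (⊤ : SimpleGraph (Fin n)) M) :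
    ∀ C : Set (Sym2 (Fin n)), M.IsCircuit' C → TwoConnEdgeSet C := by
  intro C hC' X Y hXY hdisj hX hY
  by_contra hlt
  have hC := hC'.isCircuit
  have hsub : (verts X ∩ verts Y).Subsingleton := ncard_le_one_iff_subsingleton.1 (by omega)
  have hCE : C ⊆ (⊤ : SimpleGraph (Fin n)).edgeSet := hM.1 ▸ hC.subset_ground
  have hXC : X ⊂ C := hXY ▸ left_lt_sup.2 fun hYX => hY.ne_empty (hdisj.symm.eq_bot_of_le hYX)
  have hYC : Y ⊂ C := hXY ▸ right_lt_sup.2 fun hXY' => hX.ne_empty (hdisj.eq_bot_of_le hXY')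
  have hXE := hXC.subset.trans hCE
  have hYE := hYC.subset.trans hCE
  -- if `X` and `Y` share no vertex, let them share one by enlarging the vertex set of `Y`
  obtain ⟨v, hvX, hXYv⟩ : ∃ v ∈ verts X, verts X ∩ verts Y ⊆ {v} := by
    obtain hempty | ⟨v, hv⟩ := (verts X ∩ verts Y).eq_empty_or_nonempty
    · obtain ⟨v, hv⟩ := (verts_nontrivial hXE hX).nonempty
      exact ⟨v, hv, hempty ▸ empty_subset _⟩
    · exact ⟨v, hv.1, (hsub.eq_singleton_of_mem hv).subset⟩
  have hUW : verts X ∩ insert v (verts Y) ⊆ {v} := by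
    rw [inter_insert_of_mem hvX]
    exact insert_subset rfl hXYv
  obtain ⟨u, hu, huv⟩ := (verts_nontrivial hXE hX).exists_ne v
  obtain ⟨w, hw, hwv⟩ := ((verts_nontrivial hYE hY).mono (subset_insert v _)).exists_ne v
  have hI := indep_doubleFan_union_doubleFan hze (toFinite _) (toFinite _) hUW hvX
    (mem_insert v _) hu hw huv hwv
  have hdisjI := (disjoint_cliqueEdges (subsingleton_singleton.anti hUW)).mono
    (doubleFan_subset_cliqueEdges _ v u) (doubleFan_subset_cliqueEdges _ v w)
  refine hC.not_indep (hXY ▸ union_indep_of_subset_closure hI hdisjI (hC.ssubset_indep hXC) ?_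
    (hC.ssubset_indep hYC) ?_)
  · exact (subset_cliqueEdges_verts hXE).trans
      (cliqueEdges_subset_closure_doubleFan hM hvX hu huv.symm)
  · exact (subset_cliqueEdges_verts hYE).trans <| (cliqueEdges_mono (subset_insert v _)).trans
      (cliqueEdges_subset_closure_doubleFan hM (mem_insert v _) hw hwv.symm)
end
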